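/- Define σ*(t) = 3/(4t²) + 15/(16(t−1)²) + 103/(144t) − 103/(144(t−1)) for t ∈ ℂ with t ≠ 0, 1. For every λ ∈ ℂ with λ ≠ 0, λ ≠ 1 and λ ≠ −1, one has (32 + 49λ² + 27λ⁴)/(36·λ²·(λ²−1)²) = (2/λ³)²·σ*(1 − 1/λ²) − 3/λ². -/

import Mathlib

/-- The sigma invariant of the quotient Shimura curve `V₆* = V₆/⟨w₂,w₃⟩` of
discriminant 6, in a coordinate with elliptic points of indices 2, 4, 6 at
`t = 0, 1, ∞`. -/
noncomputable def sigmaStar (t : ℂ) : ℂ :=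
  3 / (4 * t ^ 2) + 15 / (16 * (t - 1) ^ 2) + 103 / (144 * t) - 103 / (144 * (t - 1))

theorem sigmaStar_eq_div {t : ℂ} (ht₀ : t ≠ 0) (ht₁ : t ≠ 1) :
    sigmaStar t = (140 * t ^ 2 - 113 * t + 108) / (144 * t ^ 2 * (t - 1) ^ 2) := by
  have : t - 1 ≠ 0 := sub_ne_zero.mpr ht₁
  unfold sigmaStar
  field_simp
  ring

/-- The sigma invariant of the Picard-Fuchs equation of the family of twists No. 9
equals the pullback of `σ*` through the degree-2 map `t = 1 - 1/λ²` (whose derivative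
is `2/λ³`), corrected by the Schwarzian derivative `-3/λ²` of that map. -/
theorem sigma_match_no9 (l : ℂ) (h0 : l ≠ 0) (h1 : l ≠ 1) (h2 : l ≠ -1) :
    (32 + 49 * l ^ 2 + 27 * l ^ 4) / (36 * l ^ 2 * (l ^ 2 - 1) ^ 2)
      = (2 / l ^ 3) ^ 2 * sigmaStar (1 - 1 / l ^ 2) - 3 / l ^ 2 := by
  have hl₀ : l ^ 2 ≠ 0 := pow_ne_zero 2 h0
  have hl₁ : l ^ 2 - 1 ≠ 0 := sub_ne_zero.mpr (sq_ne_one_iff.mpr ⟨h1, h2⟩)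
  have ht₀ : 1 - 1 / l ^ 2 ≠ 0 := by
    rw [one_sub_div hl₀]
    exact div_ne_zero hl₁ hl₀
  have ht₁ : 1 - 1 / l ^ 2 ≠ 1 := by simpa using h0
  rw [sigmaStar_eq_div ht₀ ht₁]
  field_simp
  ring
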